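/- arXiv:1709.03922 — 3 statements merged into one kernel-verified Lean document; each statement's English description precedes it below -/
import Mathlib

section
/- Let 0 < γ < 1 and let R ≥ 0, Q ≥ 0 be real numbers with R + Q > 0. Then there exists a unique real number Z > 0 such that Z^γ − R·Z^{γ−1} = Q; moreover this Z satisfies Z ≥ R. -/
/-! Writing `Z ^ γ - R * Z ^ (γ - 1) = Z ^ (γ - 1) * (Z - R)` shows that the left side has the
sign of `Z - R`, so a root of `… = Q ≥ 0` lies in `[R, ∞)`. For `0 < γ ≤ 1` the map is strictly
increasing on `(0, ∞)` (an increasing power minus a nonnegative multiple of a nonincreasing one)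
and tends to `∞`; it vanishes at `R`, so the intermediate value theorem on `[R, ∞)` gives a
root when `R > 0`, while for `R = 0` the root is `Q ^ (1 / γ)`. -/

open Real Set Filter

namespace Real

theorem rpow_sub_mul_rpow_sub_one_eq (γ R : ℝ) {Z : ℝ} (hZ : 0 < Z) :
    Z ^ γ - R * Z ^ (γ - 1) = Z ^ (γ - 1) * (Z - R) := by
  rw [rpow_sub hZ, rpow_one]
  field_simp

theorem le_of_rpow_sub_mul_rpow_sub_one_nonneg {γ R Z : ℝ} (hZ : 0 < Z)
    (h : 0 ≤ Z ^ γ - R * Z ^ (γ - 1)) : R ≤ Z := by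
  rw [rpow_sub_mul_rpow_sub_one_eq γ R hZ] at h
  exact sub_nonneg.mp (nonneg_of_mul_nonneg_right h (rpow_pos_of_pos hZ _))

theorem strictMonoOn_rpow_sub_mul_rpow_sub_one {γ R : ℝ} (hγ0 : 0 < γ) (hγ1 : γ ≤ 1)
    (hR : 0 ≤ R) : StrictMonoOn (fun Z : ℝ => Z ^ γ - R * Z ^ (γ - 1)) (Ioi 0) := by
  intro a ha b _ hab
  have hγ : a ^ γ < b ^ γ := rpow_lt_rpow ha.le hab hγ0
  have hγ_sub_one : b ^ (γ - 1) ≤ a ^ (γ - 1) :=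
    rpow_le_rpow_of_nonpos ha hab.le (by linarith)
  have hR_mul := mul_le_mul_of_nonneg_left hγ_sub_one hR
  dsimp only
  linarith

theorem continuousOn_rpow_sub_mul_rpow_sub_one (γ R : ℝ) :
    ContinuousOn (fun Z : ℝ => Z ^ γ - R * Z ^ (γ - 1)) (Ioi 0) := by
  have hne : ∀ Z ∈ Ioi (0 : ℝ), Z ≠ 0 ∨ 0 ≤ γ := fun Z hZ => Or.inl (ne_of_gt hZ)
  have hne' : ∀ Z ∈ Ioi (0 : ℝ), Z ≠ 0 ∨ 0 ≤ γ - 1 := fun Z hZ => Or.inl (ne_of_gt hZ)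
  exact (continuousOn_id.rpow_const hne).sub
    (continuousOn_const.mul (continuousOn_id.rpow_const hne'))

theorem tendsto_rpow_sub_mul_rpow_sub_one_atTop {γ : ℝ} (hγ0 : 0 < γ) (hγ1 : γ ≤ 1) (R : ℝ) :
    Tendsto (fun Z : ℝ => Z ^ γ - R * Z ^ (γ - 1)) atTop atTop := by
  refine tendsto_atTop_mono' atTop ?_ (tendsto_atTop_add_const_right _ (-|R|)
    (tendsto_rpow_atTop hγ0))
  filter_upwards [eventually_ge_atTop 1] with Z hZ
  have hpow_le_one : Z ^ (γ - 1) ≤ 1 := rpow_le_one_of_one_le_of_nonpos hZ (by linarith)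
  have hpow_nonneg : 0 ≤ Z ^ (γ - 1) := rpow_nonneg (by linarith) _
  have hR_mul : R * Z ^ (γ - 1) ≤ |R| := calc
    R * Z ^ (γ - 1) ≤ |R| * Z ^ (γ - 1) := mul_le_mul_of_nonneg_right (le_abs_self R) hpow_nonneg
    _ ≤ |R| := mul_le_of_le_one_right (abs_nonneg R) hpow_le_one
  linarith

theorem exists_pos_rpow_sub_mul_rpow_sub_one_eq {γ R Q : ℝ} (hγ0 : 0 < γ) (hγ1 : γ ≤ 1)
    (hR : 0 ≤ R) (hQ : 0 ≤ Q) (hRQ : 0 < R + Q) :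
    ∃ Z : ℝ, 0 < Z ∧ Z ^ γ - R * Z ^ (γ - 1) = Q := by
  rcases hR.eq_or_lt with rfl | hR
  · have hQ : 0 < Q := by linarith
    refine ⟨Q ^ (1 / γ), rpow_pos_of_pos hQ _, ?_⟩
    rw [← rpow_mul hQ.le, one_div_mul_cancel hγ0.ne', rpow_one, zero_mul, sub_zero]
  · have hIVT := isPreconnected_Ici.intermediate_value_Ici self_mem_Ici
      (le_principal_iff.mpr (Ici_mem_atTop R))
      ((continuousOn_rpow_sub_mul_rpow_sub_one γ R).mono fun _ hZ => hR.trans_le hZ)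
      (tendsto_rpow_sub_mul_rpow_sub_one_atTop hγ0 hγ1 R)
    have hQ_mem : Q ∈ Ici (R ^ γ - R * R ^ (γ - 1)) := by
      rw [mem_Ici, rpow_sub_mul_rpow_sub_one_eq γ R hR, sub_self, mul_zero]
      exact hQ
    obtain ⟨Z, hRZ, hZ⟩ := hIVT hQ_mem
    exact ⟨Z, hR.trans_le hRZ, hZ⟩

end Real

theorem bifluid_pressure_closure_exists_unique
    (γ R Q : ℝ) (hγ0 : 0 < γ) (hγ1 : γ < 1)
    (hR : 0 ≤ R) (hQ : 0 ≤ Q) (hRQ : 0 < R + Q) :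
    (∃! Z : ℝ, 0 < Z ∧ Z ^ γ - R * Z ^ (γ - 1) = Q) ∧
    (∀ Z : ℝ, 0 < Z → Z ^ γ - R * Z ^ (γ - 1) = Q → R ≤ Z) := by
  obtain ⟨Z, hZ, hZQ⟩ := exists_pos_rpow_sub_mul_rpow_sub_one_eq hγ0 hγ1.le hR hQ hRQ
  refine ⟨⟨Z, ⟨hZ, hZQ⟩, fun Y ⟨hY, hYQ⟩ => ?_⟩, fun Y hY hYQ => ?_⟩
  · exact (strictMonoOn_rpow_sub_mul_rpow_sub_one hγ0 hγ1.le hR).injOn hY hZ (hYQ.trans hZQ.symm)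
  · exact le_of_rpow_sub_mul_rpow_sub_one_nonneg hY (hYQ ▸ hQ)
end

section
/- Let 0 < γ < 1, and let (R₀, Q₀) ∈ ℝ² with R₀ ≥ 0. Suppose Z : ℝ × ℝ → ℝ is continuous at (R₀, Q₀), that Z(R₀,Q₀) > 0, and that Z(R,Q)^γ − R·Z(R,Q)^{γ−1} = Q holds for all (R,Q) in some neighborhood of (R₀,Q₀) with Z(R,Q) > 0 there. Then Z is (Fréchet) differentiable at (R₀,Q₀), with partial derivatives ∂Z/∂R = Z₀^{γ−1} / (γ·Z₀^{γ−1} − (γ−1)·R₀·Z₀^{γ−2}) and ∂Z/∂Q = 1 / (γ·Z₀^{γ−1} − (γ−1)·R₀·Z₀^{γ−2}), where Z₀ = Z(R₀,Q₀). -/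
/-!
View the closure relation as `F((R, Q), Z) = Z^γ - R Z^(γ-1) - Q = 0`. Its partial derivative in `Z`
is `D = γ Z^(γ-1) - (γ-1) R Z^(γ-2) = Z^(γ-2) (γ Z + (1-γ) R) > 0`, so the implicit function theorem
gives a differentiable local solution `ψ` with `∂F/∂(R,Q) + D dψ = 0`, and it is the only solution
near `((R₀, Q₀), Z₀)`. A solution `Z` continuous at `(R₀, Q₀)` therefore agrees with `ψ` nearby.
-/

open Real

open Filter Topology ContinuousLinearMap in
theorem HasStrictFDerivAt.hasFDerivAt_of_eventually_apply_eq
    {𝕜 : Type*} [NontriviallyNormedField 𝕜]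
    {E₁ : Type*} [NormedAddCommGroup E₁] [NormedSpace 𝕜 E₁] [CompleteSpace E₁]
    {E₂ : Type*} [NormedAddCommGroup E₂] [NormedSpace 𝕜 E₂] [CompleteSpace E₂]
    {F : Type*} [NormedAddCommGroup F] [NormedSpace 𝕜 F] [CompleteSpace F]
    {f : E₁ × E₂ → F} {f' : E₁ × E₂ →L[𝕜] F} {u : E₁ × E₂}
    (hf : HasStrictFDerivAt f f' u) (L : E₂ ≃L[𝕜] F) (hL : f' ∘L inr 𝕜 E₁ E₂ = L)
    {ψ : E₁ → E₂} (hψ : ContinuousAt ψ u.1) (hψu : ψ u.1 = u.2)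
    {c : F} (hfψ : ∀ᶠ x in 𝓝 u.1, f (x, ψ x) = c) :
    HasFDerivAt ψ (-(L.symm : F →L[𝕜] E₂) ∘L (f' ∘L inl 𝕜 E₁ E₂)) u.1 := by
  have hinv : (f' ∘L inr 𝕜 E₁ E₂).IsInvertible := hL ▸ isInvertible_equiv
  have hgraph : Tendsto (fun x => (x, ψ x)) (𝓝 u.1) (𝓝 u) := by
    simpa [hψu] using (continuousAt_id.prodMk hψ).tendsto
  have hc : f u = c := by simpa [hψu] using hfψ.self_of_nhds
  have hψ_eq : hf.implicitFunctionOfProdDomain hinv =ᶠ[𝓝 u.1] ψ := by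
    filter_upwards [hfψ,
      hgraph.eventually (hf.eventually_apply_eq_iff_implicitFunctionOfProdDomain hinv)]
      with x hx hiff
    exact hiff.mp (hx.trans hc.symm)
  have hderiv := (hf.hasStrictFDerivAt_implicitFunctionOfProdDomain hinv).hasFDerivAt
  rw [hL, inverse_equiv] at hderiv
  exact hderiv.congr_of_eventuallyEq hψ_eq.symm

theorem mul_rpow_sub_one_sub_mul_rpow_sub_two_pos {γ R z : ℝ} (hγ0 : 0 < γ) (hγ1 : γ ≤ 1)
    (hR : 0 ≤ R) (hz : 0 < z) :
    0 < γ * z ^ (γ - 1) - (γ - 1) * R * z ^ (γ - 2) := by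
  have hsplit : z ^ (γ - 1) = z ^ (γ - 2) * z := by
    rw [← rpow_add_one hz.ne']
    ring_nf
  have hfactor : γ * z ^ (γ - 1) - (γ - 1) * R * z ^ (γ - 2)
      = z ^ (γ - 2) * (γ * z + (1 - γ) * R) := by
    rw [hsplit]
    ring
  rw [hfactor]
  have := rpow_pos_of_pos hz (γ - 2)
  positivity

/-- With `v = ((R, Q), Z)`, the closure relation `Q = (1 - R/Z) Z^γ` reads
`closureResidual γ v = 0`. -/
noncomputable def closureResidual (γ : ℝ) (v : (ℝ × ℝ) × ℝ) : ℝ :=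
  v.2 ^ γ - v.1.1 * v.2 ^ (γ - 1) - v.1.2

open ContinuousLinearMap in
theorem hasStrictFDerivAt_closureResidual (γ R Q : ℝ) {z : ℝ} (hz : z ≠ 0) :
    HasStrictFDerivAt (closureResidual γ)
      ((-z ^ (γ - 1)) • (fst ℝ ℝ ℝ ∘L fst ℝ (ℝ × ℝ) ℝ) - snd ℝ ℝ ℝ ∘L fst ℝ (ℝ × ℝ) ℝ
        + (γ * z ^ (γ - 1) - (γ - 1) * R * z ^ (γ - 2)) • snd ℝ (ℝ × ℝ) ℝ) ((R, Q), z) := by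
  have hpow (p : ℝ) : HasStrictFDerivAt (fun v : (ℝ × ℝ) × ℝ => v.2 ^ p)
      ((p * z ^ (p - 1)) • snd ℝ (ℝ × ℝ) ℝ) ((R, Q), z) :=
    (hasStrictDerivAt_rpow_const (Or.inl hz)).comp_hasStrictFDerivAt (h₂ := (· ^ p)) _
      hasStrictFDerivAt_snd
  have hR : HasStrictFDerivAt (fun v : (ℝ × ℝ) × ℝ => v.1.1) (fst ℝ ℝ ℝ ∘L fst ℝ (ℝ × ℝ) ℝ)
      ((R, Q), z) := hasStrictFDerivAt_fst.fst
  have hQ : HasStrictFDerivAt (fun v : (ℝ × ℝ) × ℝ => v.1.2) (snd ℝ ℝ ℝ ∘L fst ℝ (ℝ × ℝ) ℝ)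
      ((R, Q), z) := hasStrictFDerivAt_fst.snd
  refine (((hpow γ).sub (hR.mul (hpow (γ - 1)))).sub hQ).congr_fderiv ?_
  rw [show γ - 1 - 1 = γ - 2 by ring]
  ext <;> simp
  ring

theorem bifluid_Z_hasFDerivAt
    (γ : ℝ) (hγ0 : 0 < γ) (hγ1 : γ < 1)
    (R₀ Q₀ : ℝ) (hR₀ : 0 ≤ R₀)
    (Z : ℝ × ℝ → ℝ)
    (hcont : ContinuousAt Z (R₀, Q₀))
    (hZ₀pos : 0 < Z (R₀, Q₀))
    (hrel : ∀ᶠ p : ℝ × ℝ in nhds (R₀, Q₀),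
      0 < Z p ∧ (Z p) ^ γ - p.1 * (Z p) ^ (γ - 1) = p.2) :
    HasFDerivAt Z
      (((Z (R₀, Q₀)) ^ (γ - 1) /
          (γ * (Z (R₀, Q₀)) ^ (γ - 1) - (γ - 1) * R₀ * (Z (R₀, Q₀)) ^ (γ - 2))) •
            ContinuousLinearMap.fst ℝ ℝ ℝ +
        (1 / (γ * (Z (R₀, Q₀)) ^ (γ - 1) - (γ - 1) * R₀ * (Z (R₀, Q₀)) ^ (γ - 2))) •
            ContinuousLinearMap.snd ℝ ℝ ℝ)
      (R₀, Q₀) := by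
  set Z₀ := Z (R₀, Q₀)
  set D := γ * Z₀ ^ (γ - 1) - (γ - 1) * R₀ * Z₀ ^ (γ - 2)
  have hD : D ≠ 0 := (mul_rpow_sub_one_sub_mul_rpow_sub_two_pos hγ0 hγ1.le hR₀ hZ₀pos).ne'
  have hsolves : ∀ᶠ p in nhds (R₀, Q₀), closureResidual γ (p, Z p) = 0 := by
    filter_upwards [hrel] with p hp
    exact sub_eq_zero.2 hp.2
  have hZ := HasStrictFDerivAt.hasFDerivAt_of_eventually_apply_eq
    (hasStrictFDerivAt_closureResidual γ R₀ Q₀ hZ₀pos.ne')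
    (ContinuousLinearEquiv.unitsEquivAut ℝ (Units.mk0 D hD)) (by ext; simp [D]) hcont rfl hsolves
  refine hZ.congr_fderiv ?_
  ext
  · simp
    field_simp
  · simp
end

section
/- Let 0 < γ < 1 and k ≥ 1. For i = 1, 2 let Rᵢ, Qᵢ ≥ 0 with Rᵢ + Qᵢ > 0, and let Zᵢ = Z(Rᵢ,Qᵢ). Then |min(Z₁, k) − min(Z₂, k)| ≤ (1/γ)·|R₁ − R₂| + (k^{1−γ}/γ)·|Q₁ − Q₂|. -/
/-!
It suffices to bound `W - Z₂` where `W = min Z₁ k` and `Z₂ < W ≤ Z₁`. With `p = 1 - γ`, the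
tangent-line bound for the concave `Z ↦ Z ^ p` at `Z₂`, together with `Q₂ Z₂ ^ p = Z₂ - R₂ ≤ Z₂`,
gives `γ (W - Z₂) ≤ W - R₂ - Q₂ W ^ p`; monotonicity of `Z ↦ Z ^ γ - R₁ Z ^ (γ - 1)` gives
`W - R₁ - Q₁ W ^ p ≤ 0`. Subtracting, `γ (W - Z₂) ≤ (R₁ - R₂) + (Q₁ - Q₂) W ^ p`, and `W ≤ k`.
-/

open Real Set

namespace Real

lemma rpow_one_sub_mul_rpow_sub_mul_rpow_sub_one {γ Z : ℝ} (hZ : 0 < Z) (R Q : ℝ) :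
    Z ^ (1 - γ) * (Z ^ γ - R * Z ^ (γ - 1) - Q) = Z - R - Q * Z ^ (1 - γ) := by
  have hZγ : Z ^ (1 - γ) * Z ^ γ = Z := by rw [← rpow_add hZ]; simp
  have hZγ1 : Z ^ (1 - γ) * Z ^ (γ - 1) = 1 := by rw [← rpow_add hZ]; simp
  linear_combination hZγ - R * hZγ1

lemma monotoneOn_rpow_sub_mul_rpow_sub_one {γ R : ℝ} (hγ0 : 0 ≤ γ) (hγ1 : γ ≤ 1) (hR : 0 ≤ R) :
    MonotoneOn (fun Z : ℝ ↦ Z ^ γ - R * Z ^ (γ - 1)) (Ioi 0) := by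
  intro a ha b _ hab
  have hpow := rpow_le_rpow ha.le hab hγ0
  have hpow' := rpow_le_rpow_of_nonpos ha hab (by linarith : γ - 1 ≤ 0)
  dsimp only
  nlinarith

/-- Tangent-line bound for the concave function `y ↦ y ^ p`, cleared of negative powers. -/
lemma mul_rpow_le_rpow_mul_add {p x y : ℝ} (hp0 : 0 ≤ p) (hp1 : p ≤ 1) (hx : 0 < x) (hy : 0 ≤ y) :
    x * y ^ p ≤ x ^ p * (p * y + (1 - p) * x) := by
  have hamgm := geom_mean_le_arith_mean2_weighted hp0 (by linarith) hy hx.le (add_sub_cancel p 1)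
  have hx1 : x ^ p * x ^ (1 - p) = x := by rw [← rpow_add hx]; simp
  calc x * y ^ p = x ^ p * x ^ (1 - p) * y ^ p := by rw [hx1]
    _ = x ^ p * (y ^ p * x ^ (1 - p)) := by ring
    _ ≤ x ^ p * (p * y + (1 - p) * x) := by gcongr

end Real

section TruncatedPressure

variable {γ R Q Z W : ℝ}

lemma sub_sub_mul_rpow_nonpos_of_le (hγ0 : 0 ≤ γ) (hγ1 : γ ≤ 1) (hR : 0 ≤ R)
    (hW : 0 < W) (hWZ : W ≤ Z) (hZ : Z ^ γ - R * Z ^ (γ - 1) = Q) :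
    W - R - Q * W ^ (1 - γ) ≤ 0 := by
  have hmono := monotoneOn_rpow_sub_mul_rpow_sub_one hγ0 hγ1 hR hW (hW.trans_le hWZ) hWZ
  rw [← rpow_one_sub_mul_rpow_sub_mul_rpow_sub_one hW]
  exact mul_nonpos_of_nonneg_of_nonpos (rpow_nonneg hW.le _) (by simp only at hmono; linarith)

lemma mul_sub_le_sub_sub_mul_rpow (hγ0 : 0 ≤ γ) (hγ1 : γ ≤ 1) (hR : 0 ≤ R) (hQ : 0 ≤ Q)
    (hZ : 0 < Z) (hZW : Z ≤ W) (hZeq : Z ^ γ - R * Z ^ (γ - 1) = Q) :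
    γ * (W - Z) ≤ W - R - Q * W ^ (1 - γ) := by
  have hfix : Z - R - Q * Z ^ (1 - γ) = 0 := by
    rw [← rpow_one_sub_mul_rpow_sub_mul_rpow_sub_one hZ, hZeq, sub_self, mul_zero]
  have hconc := mul_le_mul_of_nonneg_left
    (mul_rpow_le_rpow_mul_add (p := 1 - γ) (by linarith) (by linarith) hZ (hZ.le.trans hZW)) hQ
  have hRW : 0 ≤ R * ((1 - γ) * (W - Z)) := mul_nonneg hR (mul_nonneg (by linarith) (by linarith))
  have hscaled : Z * (Q * (W ^ (1 - γ) - Z ^ (1 - γ))) ≤ Z * ((1 - γ) * (W - Z)) := by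
    linear_combination hconc + hRW - ((1 - γ) * (W - Z)) * hfix
  linarith [le_of_mul_le_mul_left hscaled hZ]

lemma min_sub_min_le {k R₁ R₂ Q₁ Q₂ Z₁ Z₂ : ℝ} (hγ0 : 0 < γ) (hγ1 : γ ≤ 1) (hk : 0 ≤ k)
    (hR₁ : 0 ≤ R₁) (hR₂ : 0 ≤ R₂) (hQ₂ : 0 ≤ Q₂)
    (hZ₁ : Z₁ ^ γ - R₁ * Z₁ ^ (γ - 1) = Q₁)
    (hZ₂pos : 0 < Z₂) (hZ₂ : Z₂ ^ γ - R₂ * Z₂ ^ (γ - 1) = Q₂) :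
    min Z₁ k - min Z₂ k ≤ (|R₁ - R₂| + k ^ (1 - γ) * |Q₁ - Q₂|) / γ := by
  set W := min Z₁ k
  rcases le_or_gt W (min Z₂ k) with hle | hlt
  · have : 0 ≤ (|R₁ - R₂| + k ^ (1 - γ) * |Q₁ - Q₂|) / γ := by positivity
    linarith
  have hZ₂W : Z₂ < W := (min_lt_iff.mp hlt).resolve_right (min_le_right Z₁ k).not_gt
  rw [min_eq_left (hZ₂W.le.trans (min_le_right Z₁ k))]
  have hW : 0 < W := hZ₂pos.trans hZ₂W
  have hWk : W ^ (1 - γ) ≤ k ^ (1 - γ) := rpow_le_rpow hW.le (min_le_right Z₁ k) (by linarith)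
  have hQ : (Q₁ - Q₂) * W ^ (1 - γ) ≤ k ^ (1 - γ) * |Q₁ - Q₂| :=
    calc (Q₁ - Q₂) * W ^ (1 - γ) ≤ |Q₁ - Q₂| * W ^ (1 - γ) := by
          gcongr; exact le_abs_self _
      _ ≤ k ^ (1 - γ) * |Q₁ - Q₂| := by rw [mul_comm]; gcongr
  have h₂ := mul_sub_le_sub_sub_mul_rpow hγ0.le hγ1 hR₂ hQ₂ hZ₂pos hZ₂W.le hZ₂
  have h₁ := sub_sub_mul_rpow_nonpos_of_le hγ0.le hγ1 hR₁ hW (min_le_left Z₁ k) hZ₁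
  rw [le_div_iff₀ hγ0]
  linarith [le_abs_self (R₁ - R₂)]

end TruncatedPressure

theorem bifluid_truncated_Z_lipschitz_general
    (γ k : ℝ) (hγ0 : 0 < γ) (hγ1 : γ < 1) (hk : 1 ≤ k)
    (R₁ R₂ Q₁ Q₂ Z₁ Z₂ : ℝ)
    (hR₁ : 0 ≤ R₁) (hR₂ : 0 ≤ R₂) (hQ₁ : 0 ≤ Q₁) (hQ₂ : 0 ≤ Q₂)
    (hZ₁pos : 0 < Z₁) (hZ₁ : Z₁ ^ γ - R₁ * Z₁ ^ (γ - 1) = Q₁)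
    (hZ₂pos : 0 < Z₂) (hZ₂ : Z₂ ^ γ - R₂ * Z₂ ^ (γ - 1) = Q₂) :
    |min Z₁ k - min Z₂ k| ≤
      (1 / γ) * |R₁ - R₂| + (k ^ (1 - γ) / γ) * |Q₁ - Q₂| := by
  have hk0 : 0 ≤ k := by linarith
  rw [show (1 / γ) * |R₁ - R₂| + (k ^ (1 - γ) / γ) * |Q₁ - Q₂|
      = (|R₁ - R₂| + k ^ (1 - γ) * |Q₁ - Q₂|) / γ by ring, abs_sub_le_iff]
  constructor
  · exact min_sub_min_le hγ0 hγ1.le hk0 hR₁ hR₂ hQ₂ hZ₁ hZ₂pos hZ₂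
  · rw [abs_sub_comm R₁, abs_sub_comm Q₁]
    exact min_sub_min_le hγ0 hγ1.le hk0 hR₂ hR₁ hQ₁ hZ₂ hZ₁pos hZ₁

theorem bifluid_truncated_Z_lipschitz
    (γ k : ℝ) (hγ0 : 0 < γ) (hγ1 : γ < 1) (hk : 1 ≤ k)
    (R₁ R₂ Q₁ Q₂ Z₁ Z₂ : ℝ)
    (hR₁ : 0 ≤ R₁) (hR₂ : 0 ≤ R₂) (hQ₁ : 0 ≤ Q₁) (hQ₂ : 0 ≤ Q₂)
    (hRQ₁ : 0 < R₁ + Q₁) (hRQ₂ : 0 < R₂ + Q₂)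
    (hZ₁pos : 0 < Z₁) (hZ₁ : Z₁ ^ γ - R₁ * Z₁ ^ (γ - 1) = Q₁)
    (hZ₂pos : 0 < Z₂) (hZ₂ : Z₂ ^ γ - R₂ * Z₂ ^ (γ - 1) = Q₂) :
    |min Z₁ k - min Z₂ k| ≤
      (1 / γ) * |R₁ - R₂| + (k ^ (1 - γ) / γ) * |Q₁ - Q₂| :=
  bifluid_truncated_Z_lipschitz_general γ k hγ0 hγ1 hk R₁ R₂ Q₁ Q₂ Z₁ Z₂ hR₁ hR₂ hQ₁ hQ₂ hZ₁pos hZ₁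
    hZ₂pos hZ₂
end
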